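/- Let G be a finite group, K a field of characteristic 0, and t ∈ K transcendental over ℚ. Define a bilinear form on the group algebra K[G] by B(σ, τ) = t^{n(σ·τ)} on group elements (extended bilinearly), where n : G → ℕ is any function satisfying n(e) = d and n(g) < d for all g ≠ e, for some fixed d. Then the bilinear form B'(σ, τ) = B(σ⁻¹, τ) is nondegenerate. -/

import Mathlib

open Polynomial

/-!
The Gram matrix of `B'` in the basis `G` is the specialisation at `X = t` of the matrix
`(X ^ n (σ⁻¹ * τ))` over `ℚ[X]`. In the Leibniz expansion of the latter's determinant only the
identity permutation reaches degree `|G| * d`, so the determinant has coefficient `1` there and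
is nonzero; since `t` is transcendental its specialisation is nonzero too.
-/

section

variable {ι : Type*} [Fintype ι] (e : ι → ι → ℕ) {d : ℕ}

theorem Equiv.Perm.sum_lt_card_mul_of_ne_one (hdiag : ∀ i, e i i = d)
    (hoff : ∀ i j, i ≠ j → e i j < d) {σ : Equiv.Perm ι} (hσ : σ ≠ 1) :
    ∑ i, e (σ i) i < Fintype.card ι * d := by
  obtain ⟨i, hi⟩ : ∃ i, σ i ≠ i := by
    by_contra! h
    exact hσ (Equiv.ext h)
  calc ∑ j, e (σ j) j < ∑ _j : ι, d :=
        Finset.sum_lt_sum (fun j _ => by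
          by_cases hj : σ j = j
          · rw [hj, hdiag]
          · exact (hoff _ _ hj).le) ⟨i, Finset.mem_univ i, hoff _ _ hi⟩
    _ = Fintype.card ι * d := by simp

theorem Matrix.coeff_det_of_X_pow {R : Type*} [CommRing R] [DecidableEq ι]
    (hdiag : ∀ i, e i i = d) (hoff : ∀ i j, i ≠ j → e i j < d) :
    (of fun i j => (X : R[X]) ^ e i j).det.coeff (Fintype.card ι * d) = 1 := by
  rw [det_apply', finsetSum_coeff, Finset.sum_eq_single 1]
  · simp [hdiag, ← pow_mul, mul_comm]
  · intro σ _ hσ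
    simp only [of_apply, Finset.prod_pow_eq_pow_sum, coeff_intCast_mul, coeff_X_pow,
      if_neg (Equiv.Perm.sum_lt_card_mul_of_ne_one e hdiag hoff hσ).ne', mul_zero]
  · simp

end

theorem Matrix.det_map_aeval_ne_zero_of_transcendental {ι R A : Type*} [Fintype ι]
    [DecidableEq ι] [CommRing R] [CommRing A] [Algebra R A] {t : A} (ht : Transcendental R t)
    {P : Matrix ι ι R[X]} (hP : P.det ≠ 0) : (P.map (aeval t)).det ≠ 0 :=
  fun h => ht ⟨_, hP, ((aeval t).map_det P).trans h⟩

/-- Let `G` be a finite group, `K` a field of characteristic `0`, and `t ∈ K`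
transcendental over `ℚ`.  Let `n : G → ℕ` satisfy `n 1 = d` and `n g < d` for `g ≠ 1`.
If `B'` is the bilinear form on the group algebra `K[G]` determined on group elements
by `B'(σ, τ) = B(σ⁻¹, τ) = t ^ n (σ⁻¹ τ)` (extended bilinearly), then `B'` is
nondegenerate. -/
theorem stmt_17 {K G : Type*} [Field K] [CharZero K] [Group G] [Fintype G]
    (t : K) (htr : Transcendental ℚ t)
    (d : ℕ) (n : G → ℕ) (hne : n 1 = d) (hlt : ∀ g : G, g ≠ 1 → n g < d)
    (B' : MonoidAlgebra K G →ₗ[K] MonoidAlgebra K G →ₗ[K] K)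
    (hB' : ∀ σ τ : G,
      B' (MonoidAlgebra.single σ 1) (MonoidAlgebra.single τ 1) = t ^ n (σ⁻¹ * τ)) :
    (∀ x : MonoidAlgebra K G, (∀ y, B' x y = 0) → x = 0) ∧
    (∀ y : MonoidAlgebra K G, (∀ x, B' x y = 0) → y = 0) := by
  classical
  let P : Matrix G G ℚ[X] := .of fun σ τ => X ^ n (σ⁻¹ * τ)
  have hP : P.det ≠ 0 := by
    intro h
    simpa [P, h] using Matrix.coeff_det_of_X_pow (R := ℚ) (fun σ τ => n (σ⁻¹ * τ))
      (fun σ => by simp [hne]) (fun σ τ h => hlt _ (by rwa [Ne, inv_mul_eq_one]))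
  have hgram : LinearMap.toMatrix₂ (MonoidAlgebra.basis G K) (MonoidAlgebra.basis G K) B' =
      P.map (aeval t) := by
    ext σ τ
    simp [P, hB']
  exact LinearMap.nondegenerate_of_det_ne_zero _ <|
    hgram ▸ Matrix.det_map_aeval_ne_zero_of_transcendental htr hP
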